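/- arXiv:2401.08440 — 2 statements merged into one kernel-verified Lean document; each statement's English description precedes it below -/
import Mathlib

section
/- Let Y be a compact metrizable space, Z ⊆ Y a nonempty (not necessarily closed) subset, and α a finite open cover of Y. Then D(α|_Z) = min over covers β ∈ U(Y) refining α of ord(β|_Z), where U(Y) is the countable family of covers built from finite covers by balls of diameter 1/n as above. -/
open Set

/-- `ord(β|_Z)`: (max over `z ∈ Z` of the number of members of `β` containing `z`) - 1. -/
noncomputable def coverOrdRest {Y : Type*} (β : Finset (Set Y)) (Z : Set Y) : ℤ :=
  ((sSup (Set.range fun z : Z => {U | U ∈ β ∧ (z : Y) ∈ U}.ncard) : ℕ) : ℤ) - 1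

/-- A finite open cover of `Y`. -/
def IsFinOpenCover {Y : Type*} [TopologicalSpace Y] (β : Finset (Set Y)) : Prop :=
  (∀ U ∈ β, IsOpen U) ∧ ⋃₀ (β : Set (Set Y)) = Set.univ

/-- `β` refines `α`. -/
def Refines {Y : Type*} (β α : Finset (Set Y)) : Prop :=
  ∀ V ∈ β, ∃ U ∈ α, V ⊆ U

/-- `D(α|_Z)`: minimum of `ord(β|_Z)` over finite open covers `β` of `Y` refining `α`. -/
noncomputable def coverDRest {Y : Type*} [TopologicalSpace Y]
    (α : Finset (Set Y)) (Z : Set Y) : ℤ :=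
  sInf {n : ℤ | ∃ β : Finset (Set Y), IsFinOpenCover β ∧ Refines β α ∧ coverOrdRest β Z = n}

lemma neg_one_le_coverOrdRest {Y : Type*} (β : Finset (Set Y)) (Z : Set Y) :
    -1 ≤ coverOrdRest β Z := by
  unfold coverOrdRest
  have : (0 : ℤ) ≤ ((sSup (Set.range fun z : Z => {U | U ∈ β ∧ (z : Y) ∈ U}.ncard) : ℕ) : ℤ) :=
    Int.ofNat_nonneg _
  omega

lemma coverOrdRest_mono {Y : Type*} (β β' : Finset (Set Y)) (Z : Set Y) (hZ : Z.Nonempty)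
    (h : ∀ z ∈ Z, {V | V ∈ β' ∧ z ∈ V}.ncard ≤ {U | U ∈ β ∧ z ∈ U}.ncard) :
    coverOrdRest β' Z ≤ coverOrdRest β Z := by
  unfold coverOrdRest
  have hne : Nonempty Z := hZ.to_subtype
  refine sub_le_sub_right ?_ 1
  rw [Int.ofNat_le]
  have hbdd : BddAbove (Set.range fun z : Z => {U | U ∈ β ∧ (z : Y) ∈ U}.ncard) := by
    refine ⟨β.card, ?_⟩
    rintro _ ⟨z, rfl⟩
    have hsub : {U | U ∈ β ∧ (z : Y) ∈ U} ⊆ (↑β : Set (Set Y)) := fun U hU => hU.1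
    calc {U | U ∈ β ∧ (z : Y) ∈ U}.ncard ≤ (↑β : Set (Set Y)).ncard :=
          Set.ncard_le_ncard hsub β.finite_toSet
      _ = β.card := by simp [Set.ncard_coe_finset]
  refine csSup_le (Set.range_nonempty _) ?_
  rintro _ ⟨z, rfl⟩
  exact le_trans (h z z.2) (le_csSup hbdd ⟨z, rfl⟩)

/-- Key refinement lemma: every finite open cover `β` can be refined by a ball-union cover
with order on `Z` no larger. -/
lemma exists_ballUnion_refinement {Y : Type*} [MetricSpace Y] [CompactSpace Y]
    (αn : ℕ → Finset (Set Y))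
    (hball : ∀ n, ∀ U ∈ αn n, ∃ x : Y, U = Metric.ball x (1 / (2 * ((n : ℝ) + 1))))
    (hcov : ∀ n, ⋃₀ (↑(αn n) : Set (Set Y)) = Set.univ)
    (Z : Set Y) (hZ : Z.Nonempty)
    (β : Finset (Set Y)) (hβ : IsFinOpenCover β) :
    ∃ β' : Finset (Set Y),
      ((∃ m, ∀ V ∈ β', ∃ s : Finset (Set Y), s ⊆ αn m ∧ V = ⋃₀ (↑s : Set (Set Y))) ∧
        ⋃₀ (↑β' : Set (Set Y)) = Set.univ) ∧
      Refines β' β ∧ coverOrdRest β' Z ≤ coverOrdRest β Z := by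
  classical
  obtain ⟨hopen, hcovβ⟩ := hβ
  -- Lebesgue number
  obtain ⟨δ, hδ, hLeb⟩ := lebesgue_number_lemma_of_metric_sUnion
    (isCompact_univ (X := Y)) (c := (↑β : Set (Set Y))) hopen (by rw [hcovβ])
  obtain ⟨m, hm⟩ := exists_nat_gt (1 / (2 * δ))
  have hrδ : 1 / (2 * ((m : ℝ) + 1)) ≤ δ := by
    rw [div_le_iff₀ (by positivity)]
    rw [div_lt_iff₀ (by positivity)] at hm
    nlinarith
  -- every ball in `αn m` lies in some member of β
  have hsub : ∀ B ∈ αn m, ∃ U ∈ β, B ⊆ U := by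
    intro B hB
    obtain ⟨c, rfl⟩ := hball m B hB
    obtain ⟨U, hU, hball'⟩ := hLeb c (mem_univ c)
    exact ⟨U, hU, (Metric.ball_subset_ball hrδ).trans hball'⟩
  set F : Set Y → Set Y := fun U => ⋃₀ (↑((αn m).filter fun B => B ⊆ U) : Set (Set Y)) with hF
  have hFsub : ∀ U, F U ⊆ U := by
    intro U
    apply Set.sUnion_subset
    intro B hB
    simp only [Finset.coe_filter, Set.mem_setOf_eq] at hB
    exact hB.2
  refine ⟨β.image F, ⟨⟨m, ?_⟩, ?_⟩, ?_, ?_⟩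
  · intro V hV
    obtain ⟨U, _, rfl⟩ := Finset.mem_image.mp hV
    exact ⟨(αn m).filter fun B => B ⊆ U, Finset.filter_subset _ _, rfl⟩
  · -- covers
    apply Set.eq_univ_of_forall
    intro y
    have hy : y ∈ ⋃₀ (↑(αn m) : Set (Set Y)) := by rw [hcov m]; exact mem_univ y
    obtain ⟨B, hB, hyB⟩ := hy
    obtain ⟨U, hU, hBU⟩ := hsub B hB
    refine ⟨F U, Finset.mem_coe.mpr (Finset.mem_image_of_mem F hU), ?_⟩
    exact Set.subset_sUnion_of_mem (by simp [Finset.mem_coe.mp hB, hBU]) hyB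
  · -- refines
    intro V hV
    obtain ⟨U, hU, rfl⟩ := Finset.mem_image.mp hV
    exact ⟨U, hU, hFsub U⟩
  · -- order
    apply coverOrdRest_mono _ _ _ hZ
    intro z hz
    set f : Set Y → Set Y := fun V =>
      if h : ∃ U, U ∈ β ∧ F U = V then h.choose else V with hf
    refine Set.ncard_le_ncard_of_injOn f ?_ ?_
      ((β.finite_toSet).subset fun U hU => hU.1)
    · rintro V ⟨hV, hzV⟩
      obtain ⟨U, hU, hFU⟩ := Finset.mem_image.mp hV
      have hex : ∃ U, U ∈ β ∧ F U = V := ⟨U, hU, hFU⟩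
      simp only [hf, dif_pos hex]
      refine ⟨hex.choose_spec.1, ?_⟩
      refine hFsub _ ?_
      rw [hex.choose_spec.2]
      exact hzV
    · rintro V₁ ⟨hV₁, _⟩ V₂ ⟨hV₂, _⟩ hf12
      obtain ⟨U₁, hU₁, hFU₁⟩ := Finset.mem_image.mp hV₁
      obtain ⟨U₂, hU₂, hFU₂⟩ := Finset.mem_image.mp hV₂
      have hex₁ : ∃ U, U ∈ β ∧ F U = V₁ := ⟨U₁, hU₁, hFU₁⟩
      have hex₂ : ∃ U, U ∈ β ∧ F U = V₂ := ⟨U₂, hU₂, hFU₂⟩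
      simp only [hf, dif_pos hex₁, dif_pos hex₂] at hf12
      rw [← hex₁.choose_spec.2, ← hex₂.choose_spec.2, hf12]

theorem coverDRest_eq_min_over_ball_union_covers
    {Y : Type*} [MetricSpace Y] [CompactSpace Y] [Nonempty Y]
    (αn : ℕ → Finset (Set Y))
    -- each `αn n` is a finite cover of `Y` by open balls of diameter `1/(n+1)`
    (hball : ∀ n, ∀ U ∈ αn n, ∃ x : Y, U = Metric.ball x (1 / (2 * ((n : ℝ) + 1))))
    (hcov : ∀ n, ⋃₀ (↑(αn n) : Set (Set Y)) = Set.univ)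
    (Z : Set Y) (hZ : Z.Nonempty)
    (α : Finset (Set Y)) (hα : IsFinOpenCover α) :
    coverDRest α Z =
      sInf {n : ℤ | ∃ β : Finset (Set Y),
        ((∃ m, ∀ V ∈ β, ∃ s : Finset (Set Y), s ⊆ αn m ∧ V = ⋃₀ (↑s : Set (Set Y))) ∧
          ⋃₀ (↑β : Set (Set Y)) = Set.univ) ∧
        Refines β α ∧ coverOrdRest β Z = n} := by
  classical
  set S₁ := {n : ℤ | ∃ β : Finset (Set Y), IsFinOpenCover β ∧ Refines β α ∧ coverOrdRest β Z = n}
    with hS₁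
  set S₂ := {n : ℤ | ∃ β : Finset (Set Y),
      ((∃ m, ∀ V ∈ β, ∃ s : Finset (Set Y), s ⊆ αn m ∧ V = ⋃₀ (↑s : Set (Set Y))) ∧
        ⋃₀ (↑β : Set (Set Y)) = Set.univ) ∧
      Refines β α ∧ coverOrdRest β Z = n} with hS₂
  -- ball-union covers are open covers
  have hsub : S₂ ⊆ S₁ := by
    rintro n ⟨β, ⟨⟨m, hm⟩, hcovβ⟩, href, hord⟩
    refine ⟨β, ⟨?_, hcovβ⟩, href, hord⟩
    intro V hV
    obtain ⟨s, hs, rfl⟩ := hm V hV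
    apply isOpen_sUnion
    intro B hB
    obtain ⟨x, rfl⟩ := hball m B (hs hB)
    exact Metric.isOpen_ball
  have hbdd₁ : BddBelow S₁ := by
    refine ⟨-1, ?_⟩
    rintro n ⟨β, _, _, rfl⟩
    exact neg_one_le_coverOrdRest β Z
  have hbdd₂ : BddBelow S₂ := hbdd₁.mono hsub
  have hne₁ : S₁.Nonempty :=
    ⟨coverOrdRest α Z, α, hα, fun V hV => ⟨V, hV, subset_rfl⟩, rfl⟩
  -- S₂ is nonempty: refine α itself
  have hne₂ : S₂.Nonempty := by
    obtain ⟨β', hβ'prop, href, _⟩ :=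
      exists_ballUnion_refinement αn hball hcov Z hZ α hα
    refine ⟨coverOrdRest β' Z, β', hβ'prop, ?_, rfl⟩
    intro V hV
    obtain ⟨U, hU, hVU⟩ := href V hV
    obtain ⟨W, hW, hUW⟩ := (fun V hV => ⟨V, hV, subset_rfl⟩ :
      Refines α α) U hU
    exact ⟨W, hW, hVU.trans hUW⟩
  rw [show coverDRest α Z = sInf S₁ from rfl]
  apply le_antisymm
  · exact csInf_le_csInf hbdd₁ hne₂ hsub
  · -- sInf S₂ ≤ sInf S₁
    obtain ⟨β, hβ, href, hord⟩ := Int.csInf_mem hne₁ hbdd₁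
    obtain ⟨β', hβ'prop, href', hord'⟩ :=
      exists_ballUnion_refinement αn hball hcov Z hZ β hβ
    have hmem : coverOrdRest β' Z ∈ S₂ := by
      refine ⟨β', hβ'prop, ?_, rfl⟩
      intro V hV
      obtain ⟨U, hU, hVU⟩ := href' V hV
      obtain ⟨W, hW, hUW⟩ := href U hU
      exact ⟨W, hW, hVU.trans hUW⟩
    calc sInf S₂ ≤ coverOrdRest β' Z := csInf_le hbdd₂ hmem
      _ ≤ coverOrdRest β Z := hord'
      _ = sInf S₁ := hord
end

section
/- Let A, B be nonempty compact subsets of [0,1] with Hausdorff distance d_H(A,B) < δ/4, and let G be a countable group. Define ψ(K) ⊆ [0,1]^G for compact K ⊆ [0,1] as the union of all constant configurations b^G with b ∈ K together with all sets X_J = {x ∈ [0,1]^G : x_g ∈ closure(J) for all g} where J ranges over the connected components of [0,1] ∖ K. Then ψ(A) and ψ(B) are nonempty, closed, shift-invariant subsets of [0,1]^G, and the map ψ : K([0,1]) → K([0,1]^G) is continuous with respect to the Hausdorff metrics (for the sup-type product metric on [0,1]^G: if coordinatewise distances < δ imply product distance < ε, then d_H(A,B) < δ/4 implies d_H(ψ(A),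 ψ(B)) < ε). -/
open Set

/-- The left shift action of `g` on `A^G`. -/
def shiftMap {A G : Type*} [Group G] (g : G) (x : G → A) : G → A :=
  fun h => x (g⁻¹ * h)

/-- `ψ(K)`: the union of all constant configurations `b^G` with `b ∈ K` together with the
sets `X_J = {x : x_g ∈ closure J for all g}`, `J` ranging over the connected components of
`[0,1] ∖ K`. -/
def psiSet (G : Type*) (K : Set ℝ) : Set (G → unitInterval) :=
  {x | ∃ b ∈ K, ∀ g : G, (x g : ℝ) = b} ∪
  {x | ∃ t ∈ Set.Icc (0:ℝ) 1 \ K, ∀ g : G,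
      (x g : ℝ) ∈ closure (connectedComponentIn (Set.Icc (0:ℝ) 1 \ K) t)}

namespace PsiAux

variable {K : Set ℝ} {t : ℝ}

lemma comp_ne (ht : t ∈ Icc (0:ℝ) 1 \ K) :
    (connectedComponentIn (Icc (0:ℝ) 1 \ K) t).Nonempty :=
  ⟨t, mem_connectedComponentIn ht⟩

lemma comp_bddAbove : BddAbove (connectedComponentIn (Icc (0:ℝ) 1 \ K) t) :=
  BddAbove.mono (fun x hx => (connectedComponentIn_subset _ _ hx).1) bddAbove_Icc

lemma comp_bddBelow : BddBelow (connectedComponentIn (Icc (0:ℝ) 1 \ K) t) :=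
  BddBelow.mono (fun x hx => (connectedComponentIn_subset _ _ hx).1) bddBelow_Icc

lemma comp_subset_Icc :
    connectedComponentIn (Icc (0:ℝ) 1 \ K) t ⊆
      Icc (sInf (connectedComponentIn (Icc (0:ℝ) 1 \ K) t))
        (sSup (connectedComponentIn (Icc (0:ℝ) 1 \ K) t)) :=
  fun _ hx => ⟨csInf_le comp_bddBelow hx, le_csSup comp_bddAbove hx⟩

lemma closure_comp_subset :
    closure (connectedComponentIn (Icc (0:ℝ) 1 \ K) t) ⊆
      Icc (sInf (connectedComponentIn (Icc (0:ℝ) 1 \ K) t))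
        (sSup (connectedComponentIn (Icc (0:ℝ) 1 \ K) t)) :=
  closure_minimal comp_subset_Icc isClosed_Icc

/-- Bounds: `0 ≤ sInf J`, `sInf J ≤ sSup J`, `sSup J ≤ 1`. -/
lemma comp_bounds (ht : t ∈ Icc (0:ℝ) 1 \ K) :
    0 ≤ sInf (connectedComponentIn (Icc (0:ℝ) 1 \ K) t) ∧
    sInf (connectedComponentIn (Icc (0:ℝ) 1 \ K) t) ≤
      sSup (connectedComponentIn (Icc (0:ℝ) 1 \ K) t) ∧
    sSup (connectedComponentIn (Icc (0:ℝ) 1 \ K) t) ≤ 1 := by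
  have hne := comp_ne ht
  refine ⟨le_csInf hne fun x hx => (connectedComponentIn_subset _ _ hx).1.1, ?_, ?_⟩
  · exact le_trans (csInf_le comp_bddBelow (mem_connectedComponentIn ht))
      (le_csSup comp_bddAbove (mem_connectedComponentIn ht))
  · exact csSup_le hne fun x hx => (connectedComponentIn_subset _ _ hx).1.2

lemma Ioo_subset_comp (ht : t ∈ Icc (0:ℝ) 1 \ K) :
    Ioo (sInf (connectedComponentIn (Icc (0:ℝ) 1 \ K) t))
        (sSup (connectedComponentIn (Icc (0:ℝ) 1 \ K) t)) ⊆
      connectedComponentIn (Icc (0:ℝ) 1 \ K) t := by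
  intro p hp
  obtain ⟨u, hu, hup⟩ := exists_lt_of_csInf_lt (comp_ne ht) hp.1
  obtain ⟨v, hv, hpv⟩ := exists_lt_of_lt_csSup (comp_ne ht) hp.2
  exact (isPreconnected_connectedComponentIn.ordConnected).out hu hv ⟨hup.le, hpv.le⟩

lemma Ioo_disjoint (ht : t ∈ Icc (0:ℝ) 1 \ K) {p : ℝ}
    (hp : p ∈ Ioo (sInf (connectedComponentIn (Icc (0:ℝ) 1 \ K) t))
        (sSup (connectedComponentIn (Icc (0:ℝ) 1 \ K) t))) : p ∉ K :=
  fun hpK => (connectedComponentIn_subset _ _ (Ioo_subset_comp ht hp)).2 hpK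

lemma inf_eq_zero (hKc : IsClosed K) (ht : t ∈ Icc (0:ℝ) 1 \ K)
    (h : sInf (connectedComponentIn (Icc (0:ℝ) 1 \ K) t) ∉ K) :
    sInf (connectedComponentIn (Icc (0:ℝ) 1 \ K) t) = 0 := by
  set J := connectedComponentIn (Icc (0:ℝ) 1 \ K) t with hJ
  set a₁ := sInf J with ha₁
  obtain ⟨h0, h12, h1⟩ := comp_bounds ht
  by_contra h0'
  have ha₁pos : 0 < a₁ := lt_of_le_of_ne h0 (Ne.symm h0')
  obtain ⟨e, he, hball⟩ := Metric.isOpen_iff.1 hKc.isOpen_compl a₁ h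
  have hemin : 0 < min e a₁ := lt_min he ha₁pos
  obtain ⟨u, hu, hue⟩ := exists_lt_of_csInf_lt (comp_ne ht) (by linarith : a₁ < a₁ + min e a₁)
  set p := a₁ - min e a₁ / 2 with hp
  have hpu : Icc p u ⊆ Icc (0:ℝ) 1 \ K := by
    intro q hq
    have hq1 : q ∈ Metric.ball a₁ e := by
      rw [Metric.mem_ball, Real.dist_eq, abs_lt]
      constructor
      · have := hq.1
        have : a₁ - min e a₁ / 2 ≤ q := this
        have hm : min e a₁ ≤ e := min_le_left _ _
        linarith
      · have := hq.2
        have hm : min e a₁ ≤ e := min_le_left _ _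
        have hua := (connectedComponentIn_subset _ _ hu).1.2
        linarith
    refine ⟨⟨?_, ?_⟩, hball hq1⟩
    · have hm : min e a₁ ≤ a₁ := min_le_right _ _
      have h1q := hq.1
      have : a₁ - min e a₁ / 2 ≤ q := h1q
      linarith
    · exact le_trans hq.2 (connectedComponentIn_subset _ _ hu).1.2
  have hau : a₁ ≤ u := csInf_le comp_bddBelow hu
  have hpmem : p ∈ Icc p u := ⟨le_refl p, by
    have hm : min e a₁ ≤ a₁ := min_le_right _ _
    simp only [hp]; linarith⟩
  have hpJ : p ∈ J := by
    have huIcc : u ∈ Icc p u := ⟨hpmem.2, le_refl u⟩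
    have hsub : Icc p u ⊆ connectedComponentIn (Icc (0:ℝ) 1 \ K) u :=
      isPreconnected_Icc.subset_connectedComponentIn huIcc hpu
    rw [← connectedComponentIn_eq hu] at hsub
    exact hsub hpmem
  have : a₁ ≤ p := csInf_le comp_bddBelow hpJ
  rw [hp] at this
  have hcon : (0:ℝ) < e ⊓ a₁ := hemin
  linarith

lemma sup_eq_one (hKc : IsClosed K) (ht : t ∈ Icc (0:ℝ) 1 \ K)
    (h : sSup (connectedComponentIn (Icc (0:ℝ) 1 \ K) t) ∉ K) :
    sSup (connectedComponentIn (Icc (0:ℝ) 1 \ K) t) = 1 := by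
  set J := connectedComponentIn (Icc (0:ℝ) 1 \ K) t with hJ
  set a₂ := sSup J with ha₂
  have h1 : a₂ ≤ 1 := csSup_le (comp_ne ht) fun x hx => (connectedComponentIn_subset _ _ hx).1.2
  by_contra h1'
  have ha₂lt : a₂ < 1 := lt_of_le_of_ne h1 h1'
  obtain ⟨e, he, hball⟩ := Metric.isOpen_iff.1 hKc.isOpen_compl a₂ h
  have hemin : 0 < min e (1 - a₂) := lt_min he (by linarith)
  obtain ⟨u, hu, hue⟩ := exists_lt_of_lt_csSup (comp_ne ht)
    (by linarith : a₂ - min e (1 - a₂) < a₂)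
  set p := a₂ + min e (1 - a₂) / 2 with hp
  have hua : u ≤ a₂ := le_csSup comp_bddAbove hu
  have hpu : Icc u p ⊆ Icc (0:ℝ) 1 \ K := by
    intro q hq
    have hq1 : q ∈ Metric.ball a₂ e := by
      rw [Metric.mem_ball, Real.dist_eq, abs_lt]
      have hm : min e (1 - a₂) ≤ e := min_le_left _ _
      have h2q := hq.2
      have h1q := hq.1
      constructor <;> [skip; skip] <;> · simp only [hp] at h2q; linarith
    refine ⟨⟨?_, ?_⟩, hball hq1⟩
    · exact le_trans (connectedComponentIn_subset _ _ hu).1.1 hq.1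
    · have hm : min e (1 - a₂) ≤ 1 - a₂ := min_le_right _ _
      have h2q := hq.2
      simp only [hp] at h2q; linarith
  have hpmem : p ∈ Icc u p := ⟨by simp only [hp]; linarith, le_refl p⟩
  have hpJ : p ∈ J := by
    have huIcc : u ∈ Icc u p := ⟨le_refl u, hpmem.1⟩
    have hsub : Icc u p ⊆ connectedComponentIn (Icc (0:ℝ) 1 \ K) u :=
      isPreconnected_Icc.subset_connectedComponentIn huIcc hpu
    rw [← connectedComponentIn_eq hu] at hsub
    exact hsub hpmem
  have hle : p ≤ a₂ := le_csSup comp_bddAbove hpJ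
  rw [hp] at hle
  have hcon : (0:ℝ) < min e (1 - a₂) := hemin
  linarith


lemma endpoint_mem (hK : K ⊆ Icc 0 1) (hKc : IsClosed K) (hKne : K.Nonempty)
    (ht : t ∈ Icc (0:ℝ) 1 \ K) :
    sInf (connectedComponentIn (Icc (0:ℝ) 1 \ K) t) ∈ K ∨
    sSup (connectedComponentIn (Icc (0:ℝ) 1 \ K) t) ∈ K := by
  by_contra hcon
  push_neg at hcon
  have h0 := inf_eq_zero hKc ht hcon.1
  have h1 := sup_eq_one hKc ht hcon.2
  obtain ⟨a, ha⟩ := hKne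
  have haI := hK ha
  have hnI : a ∉ Ioo (0:ℝ) 1 := fun hIoo => Ioo_disjoint ht (by rw [h0, h1]; exact hIoo) ha
  have h01 : a = 0 ∨ a = 1 := by
    rcases lt_or_eq_of_le haI.1 with h|h
    · rcases lt_or_eq_of_le haI.2 with h'|h'
      · exact absurd ⟨h, h'⟩ hnI
      · exact Or.inr h'
    · exact Or.inl h.symm
  rcases h01 with rfl|rfl
  · rw [h0] at hcon; exact hcon.1 ha
  · rw [h1] at hcon; exact hcon.2 ha

lemma psi_approx {G : Type*} [Group G] {A B : Set ℝ} (hA : A ⊆ Icc 0 1) (hB : B ⊆ Icc 0 1)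
    (hAcl : IsClosed A) (hAne : A.Nonempty) {η : ℝ} (hη : 0 < η)
    (hab : ∀ a ∈ A, ∃ b ∈ B, |a - b| < η)
    (hba : ∀ b ∈ B, ∃ a ∈ A, |a - b| < η) :
    ∀ x ∈ psiSet G A, ∃ y ∈ psiSet G B, ∀ g : G, |(x g : ℝ) - (y g : ℝ)| < 4 * η := by
  rintro x (⟨b, hbA, hconst⟩ | ⟨t, ht, hcomp⟩)
  · -- constant case
    obtain ⟨c, hcB, hc⟩ := hab b hbA
    refine ⟨fun _ => ⟨c, hB hcB⟩, Or.inl ⟨c, hcB, fun _ => rfl⟩, fun g => ?_⟩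
    rw [hconst g]
    calc |b - c| < η := hc
    _ < 4 * η := by linarith
  · -- component case
    set J := connectedComponentIn (Icc (0:ℝ) 1 \ A) t with hJ
    set a₁ := sInf J with ha₁
    set a₂ := sSup J with ha₂
    obtain ⟨h0, h12, h1⟩ := comp_bounds ht
    have hxIcc : ∀ g : G, (x g : ℝ) ∈ Icc a₁ a₂ := fun g => closure_comp_subset (hcomp g)
    by_cases hbig : 2 * η < a₂ - a₁
    · -- big component
      set m := (a₁ + a₂) / 2 with hm
      have hm₁ : a₁ + η < m := by simp only [hm]; linarith
      have hm₂ : m < a₂ - η := by simp only [hm]; linarith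
      have hBdisj : ∀ p ∈ Ioo (a₁ + η) (a₂ - η), p ∉ B := by
        intro p hp hpB
        obtain ⟨a, haA, hd⟩ := hba p hpB
        rw [abs_lt] at hd
        have haIoo : a ∈ Ioo a₁ a₂ := ⟨by linarith [hp.1], by linarith [hp.2]⟩
        exact Ioo_disjoint ht haIoo haA
      have hIooB : Ioo (a₁ + η) (a₂ - η) ⊆ Icc (0:ℝ) 1 \ B := by
        intro p hp
        exact ⟨⟨by linarith [hp.1], by linarith [hp.2]⟩, hBdisj p hp⟩
      have hmmem : m ∈ Icc (0:ℝ) 1 \ B := hIooB ⟨hm₁, hm₂⟩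
      have hIooJ' : Ioo (a₁ + η) (a₂ - η) ⊆ connectedComponentIn (Icc (0:ℝ) 1 \ B) m :=
        isPreconnected_Ioo.subset_connectedComponentIn ⟨hm₁, hm₂⟩ hIooB
      have hclos : Icc (a₁ + η) (a₂ - η) ⊆
          closure (connectedComponentIn (Icc (0:ℝ) 1 \ B) m) := by
        rw [← closure_Ioo (by linarith : a₁ + η ≠ a₂ - η)]
        exact closure_mono hIooJ'
      have hr : ∀ g : G, max (a₁ + η) (min (x g : ℝ) (a₂ - η)) ∈ Icc (a₁ + η) (a₂ - η) := by
        intro g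
        refine ⟨le_max_left _ _, max_le (by linarith) (min_le_right _ _)⟩
      refine ⟨fun g => ⟨max (a₁ + η) (min (x g : ℝ) (a₂ - η)), ?_⟩,
        Or.inr ⟨m, hmmem, fun g => hclos (hr g)⟩, fun g => ?_⟩
      · have := hr g
        exact ⟨by linarith [this.1], by linarith [this.2]⟩
      · show |(x g : ℝ) - max (a₁ + η) (min (x g : ℝ) (a₂ - η))| < 4 * η
        have hxg := hxIcc g
        have h1g := hxg.1
        have h2g := hxg.2
        rcases le_total ((x g : ℝ)) (a₂ - η) with hle|hle
        · rw [min_eq_left hle]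
          rcases le_total ((x g : ℝ)) (a₁ + η) with hle'|hle'
          · rw [max_eq_left hle', abs_lt]; constructor <;> linarith
          · rw [max_eq_right hle', abs_lt]; constructor <;> linarith
        · rw [min_eq_right hle, max_eq_right (by linarith : a₁ + η ≤ a₂ - η), abs_lt]
          constructor <;> linarith
    · -- small component
      push_neg at hbig
      have hend := endpoint_mem hA hAcl hAne ht
      have key : ∃ c ∈ A, c ∈ Icc a₁ a₂ := by
        rcases hend with h|h
        · exact ⟨a₁, h, ⟨le_refl _, h12⟩⟩
        · exact ⟨a₂, h, ⟨h12, le_refl _⟩⟩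
      obtain ⟨c, hcA, hcI⟩ := key
      obtain ⟨b, hbB, hd⟩ := hab c hcA
      refine ⟨fun _ => ⟨b, hB hbB⟩, Or.inl ⟨b, hbB, fun _ => rfl⟩, fun g => ?_⟩
      have h1 := (hxIcc g).1
      have h2 := (hxIcc g).2
      rw [abs_lt] at hd ⊢
      constructor <;> linarith [hcI.1, hcI.2, hd.1, hd.2]

lemma psiSet_isSeqClosed {G : Type*} [Group G] {K : Set ℝ} (hK : K ⊆ Icc 0 1)
    (hKc : IsClosed K) (hKne : K.Nonempty) : IsSeqClosed (psiSet G K) := by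
  intro u x hu hux
  have hcoord : ∀ g : G, Filter.Tendsto (fun n => ((u n g : ℝ))) Filter.atTop (nhds (x g : ℝ)) :=
    fun g => (continuous_subtype_val.tendsto (x g)).comp (((continuous_apply g).tendsto x).comp hux)
  have hsplit := Filter.frequently_or_distrib.mp
    (Filter.Frequently.of_forall (f := (Filter.atTop : Filter ℕ)) (fun n => (hu n : _ ∨ _)))
  rcases hsplit with hC | hD
  · obtain ⟨φ, hφ, hmem⟩ := Filter.extraction_of_frequently_atTop hC
    choose b hbK hbc using hmem
    have hb1 : Filter.Tendsto b Filter.atTop (nhds (x 1 : ℝ)) := by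
      have h := (hcoord 1).comp hφ.tendsto_atTop
      rwa [show ((fun n => ((u n 1 : ℝ))) ∘ φ) = b from funext fun k => hbc k 1] at h
    have hx1K : (x 1 : ℝ) ∈ K := hKc.mem_of_tendsto hb1 (Filter.Eventually.of_forall hbK)
    refine Or.inl ⟨(x 1 : ℝ), hx1K, fun g => ?_⟩
    have hg := (hcoord g).comp hφ.tendsto_atTop
    rw [show ((fun n => ((u n g : ℝ))) ∘ φ) = b from funext fun k => hbc k g] at hg
    exact tendsto_nhds_unique hg hb1
  · obtain ⟨φ, hφ, hmem⟩ := Filter.extraction_of_frequently_atTop hD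
    choose t ht hcl using hmem
    set a₁ : ℕ → ℝ := fun k => sInf (connectedComponentIn (Icc (0:ℝ) 1 \ K) (t k)) with ha₁
    set a₂ : ℕ → ℝ := fun k => sSup (connectedComponentIn (Icc (0:ℝ) 1 \ K) (t k)) with ha₂
    have hbnds : ∀ k, 0 ≤ a₁ k ∧ a₁ k ≤ a₂ k ∧ a₂ k ≤ 1 := fun k => comp_bounds (ht k)
    have h₁mem : ∀ k, a₁ k ∈ Icc (0:ℝ) 1 := fun k =>
      ⟨(hbnds k).1, le_trans (hbnds k).2.1 (hbnds k).2.2⟩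
    obtain ⟨α, hα, φ₂, hφ₂, hlimα⟩ :=
      (isCompact_Icc (a := (0:ℝ)) (b := 1)).tendsto_subseq h₁mem
    have h₂mem : ∀ k, a₂ (φ₂ k) ∈ Icc (0:ℝ) 1 := fun k =>
      ⟨le_trans (hbnds _).1 (hbnds _).2.1, (hbnds _).2.2⟩
    obtain ⟨β, hβ, φ₃, hφ₃, hlimβ⟩ :=
      (isCompact_Icc (a := (0:ℝ)) (b := 1)).tendsto_subseq h₂mem
    set ψ : ℕ → ℕ := φ₂ ∘ φ₃ with hψ
    have hψmono : StrictMono ψ := hφ₂.comp hφ₃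
    have hlimα' : Filter.Tendsto (fun k => a₁ (ψ k)) Filter.atTop (nhds α) :=
      hlimα.comp hφ₃.tendsto_atTop
    have hlimβ' : Filter.Tendsto (fun k => a₂ (ψ k)) Filter.atTop (nhds β) := hlimβ
    have hcoordk : ∀ g : G,
        Filter.Tendsto (fun k => ((u (φ (ψ k)) g : ℝ))) Filter.atTop (nhds (x g : ℝ)) :=
      fun g => (hcoord g).comp ((hφ.comp hψmono).tendsto_atTop)
    have hxmem : ∀ (g : G) (k : ℕ), ((u (φ (ψ k)) g : ℝ)) ∈ Icc (a₁ (ψ k)) (a₂ (ψ k)) :=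
      fun g k => closure_comp_subset (hcl (ψ k) g)
    have hxα : ∀ g : G, α ≤ (x g : ℝ) := fun g =>
      le_of_tendsto_of_tendsto' hlimα' (hcoordk g) (fun k => (hxmem g k).1)
    have hxβ : ∀ g : G, (x g : ℝ) ≤ β := fun g =>
      le_of_tendsto_of_tendsto' (hcoordk g) hlimβ' (fun k => (hxmem g k).2)
    have hαβ : α ≤ β := le_of_tendsto_of_tendsto' hlimα' hlimβ' (fun k => (hbnds (ψ k)).2.1)
    rcases eq_or_lt_of_le hαβ with heq | hlt
    · have hdisj : ∀ k, a₁ (ψ k) ∈ K ∨ a₂ (ψ k) ∈ K := fun k =>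
        endpoint_mem hK hKc hKne (ht (ψ k))
      have hsplit2 := Filter.frequently_or_distrib.mp (Filter.Frequently.of_forall (f := (Filter.atTop : Filter ℕ)) hdisj)
      have hαK : α ∈ K := by
        rcases hsplit2 with h | h
        · obtain ⟨φ₄, hφ₄, hm4⟩ := Filter.extraction_of_frequently_atTop h
          exact hKc.mem_of_tendsto (hlimα'.comp hφ₄.tendsto_atTop)
            (Filter.Eventually.of_forall hm4)
        · obtain ⟨φ₄, hφ₄, hm4⟩ := Filter.extraction_of_frequently_atTop h
          rw [heq]
          exact hKc.mem_of_tendsto (hlimβ'.comp hφ₄.tendsto_atTop)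
            (Filter.Eventually.of_forall hm4)
      exact Or.inl ⟨α, hαK, fun g => le_antisymm (by rw [heq]; exact hxβ g) (hxα g)⟩
    · set m := (α + β) / 2 with hm
      have hIooK : ∀ p ∈ Ioo α β, p ∉ K := by
        intro p hp hpK
        have h₁ := hlimα'.eventually_lt_const hp.1
        have h₂ := hlimβ'.eventually_const_lt hp.2
        obtain ⟨k, hk₁, hk₂⟩ := (h₁.and h₂).exists
        exact Ioo_disjoint (ht (ψ k)) ⟨hk₁, hk₂⟩ hpK
      have hIooIcc : Ioo α β ⊆ Icc (0:ℝ) 1 \ K := fun p hp =>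
        ⟨⟨le_trans hα.1 hp.1.le, le_trans hp.2.le hβ.2⟩, hIooK p hp⟩
      have hmIoo : m ∈ Ioo α β := ⟨by simp only [hm]; linarith, by simp only [hm]; linarith⟩
      have hmmem : m ∈ Icc (0:ℝ) 1 \ K := hIooIcc hmIoo
      have hsub : Ioo α β ⊆ connectedComponentIn (Icc (0:ℝ) 1 \ K) m :=
        isPreconnected_Ioo.subset_connectedComponentIn hmIoo hIooIcc
      refine Or.inr ⟨m, hmmem, fun g => ?_⟩
      have hxg : (x g : ℝ) ∈ Icc α β := ⟨hxα g, hxβ g⟩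
      rw [← closure_Ioo hlt.ne] at hxg
      exact closure_mono hsub hxg

lemma psiSet_mem_shift {G : Type*} [Group G] (K : Set ℝ) (g : G) {x : G → unitInterval}
    (hx : x ∈ psiSet G K) : shiftMap g x ∈ psiSet G K := by
  rcases hx with ⟨b, hb, h⟩ | ⟨t, ht, h⟩
  · exact Or.inl ⟨b, hb, fun h' => h _⟩
  · exact Or.inr ⟨t, ht, fun h' => h _⟩

lemma psiSet_shift {G : Type*} [Group G] (K : Set ℝ) (g : G) :
    shiftMap g '' psiSet G K = psiSet G K := by
  apply Subset.antisymm
  · rintro _ ⟨x, hx, rfl⟩; exact psiSet_mem_shift K g hx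
  · intro x hx
    refine ⟨shiftMap g⁻¹ x, psiSet_mem_shift K g⁻¹ hx, ?_⟩
    funext h
    show x (g⁻¹⁻¹ * (g⁻¹ * h)) = x h
    rw [inv_inv, mul_inv_cancel_left]

end PsiAux

theorem psi_subshift_and_continuity
    {G : Type*} [Group G] [Countable G]
    (A B : Set ℝ) (hA : A ⊆ Set.Icc 0 1) (hB : B ⊆ Set.Icc 0 1)
    (hAc : IsCompact A) (hBc : IsCompact B) (hAne : A.Nonempty) (hBne : B.Nonempty)
    (ε δ : ℝ) (hε : 0 < ε) (hδ : 0 < δ) :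
    letI : MetricSpace (G → unitInterval) :=
      TopologicalSpace.metrizableSpaceMetric (G → unitInterval)
    (psiSet G A).Nonempty ∧ IsClosed (psiSet G A) ∧
    (∀ g : G, shiftMap g '' psiSet G A = psiSet G A) ∧
    (psiSet G B).Nonempty ∧ IsClosed (psiSet G B) ∧
    (∀ g : G, shiftMap g '' psiSet G B = psiSet G B) ∧
    ((∀ x y : G → unitInterval, (∀ g, dist (x g) (y g) < δ) → dist x y < ε) →
      Metric.hausdorffDist A B < δ / 4 →
      Metric.hausdorffDist (psiSet G A) (psiSet G B) < ε) := by
  letI : MetricSpace (G → unitInterval) :=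
    TopologicalSpace.metrizableSpaceMetric (G → unitInterval)
  have hAcl := hAc.isClosed
  have hBcl := hBc.isClosed
  have hclA : IsClosed (psiSet G A) := (PsiAux.psiSet_isSeqClosed hA hAcl hAne).isClosed
  have hclB : IsClosed (psiSet G B) := (PsiAux.psiSet_isSeqClosed hB hBcl hBne).isClosed
  have hAne' := hAne
  have hBne' := hBne
  obtain ⟨a, ha⟩ := id hAne
  obtain ⟨b0, hb0⟩ := id hBne
  have hneA : (psiSet G A).Nonempty := ⟨fun _ => ⟨a, hA ha⟩, Or.inl ⟨a, ha, fun _ => rfl⟩⟩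
  have hneB : (psiSet G B).Nonempty := ⟨fun _ => ⟨b0, hB hb0⟩, Or.inl ⟨b0, hb0, fun _ => rfl⟩⟩
  refine ⟨hneA, hclA, fun g => PsiAux.psiSet_shift A g, hneB, hclB,
    fun g => PsiAux.psiSet_shift B g, ?_⟩
  intro hyp hd
  have hEd := Metric.hausdorffEdist_ne_top_of_nonempty_of_bounded hAne' hBne'
    hAc.isBounded hBc.isBounded
  have hη : 0 < δ / 4 := by linarith
  have hab : ∀ a ∈ A, ∃ b ∈ B, |a - b| < δ / 4 := by
    intro a' ha'
    obtain ⟨b, hb, hdist⟩ := Metric.exists_dist_lt_of_hausdorffDist_lt ha' hd hEd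
    exact ⟨b, hb, by rwa [Real.dist_eq] at hdist⟩
  have hba : ∀ b ∈ B, ∃ a ∈ A, |a - b| < δ / 4 := by
    intro b' hb'
    obtain ⟨a', ha', hdist⟩ := Metric.exists_dist_lt_of_hausdorffDist_lt' hb' hd hEd
    exact ⟨a', ha', by rwa [Real.dist_eq] at hdist⟩
  have hba' : ∀ a' ∈ B, ∃ b' ∈ A, |a' - b'| < δ / 4 := by
    intro a' ha'
    obtain ⟨b', hb', hd2⟩ := hba a' ha'
    exact ⟨b', hb', by rwa [abs_sub_comm]⟩
  have hab' : ∀ b' ∈ A, ∃ a' ∈ B, |a' - b'| < δ / 4 := by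
    intro b' hb'
    obtain ⟨c, hc, hd2⟩ := hab b' hb'
    exact ⟨c, hc, by rwa [abs_sub_comm]⟩
  have hAB := PsiAux.psi_approx (G := G) hA hB hAcl hAne' hη hab hba
  have hBA := PsiAux.psi_approx (G := G) hB hA hBcl hBne' hη hba' hab'
  have hclose : ∀ x ∈ psiSet G A, ∃ y ∈ psiSet G B, dist x y < ε := by
    intro x hx
    obtain ⟨y, hy, hbnd⟩ := hAB x hx
    refine ⟨y, hy, hyp x y fun g => ?_⟩
    rw [Subtype.dist_eq, Real.dist_eq]
    have := hbnd g
    linarith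
  have hclose' : ∀ x ∈ psiSet G B, ∃ y ∈ psiSet G A, dist x y < ε := by
    intro x hx
    obtain ⟨y, hy, hbnd⟩ := hBA x hx
    refine ⟨y, hy, hyp x y fun g => ?_⟩
    rw [Subtype.dist_eq, Real.dist_eq]
    have := hbnd g
    linarith
  haveI : CompactSpace (G → unitInterval) := Pi.compactSpace
  have hcompA : IsCompact (psiSet G A) := hclA.isCompact
  have hcompB : IsCompact (psiSet G B) := hclB.isCompact
  obtain ⟨x₀, hx₀, hx₀m⟩ := hcompA.exists_isMaxOn hneA
    (Metric.continuous_infDist_pt (psiSet G B)).continuousOn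
  obtain ⟨y₀, hy₀, hy₀m⟩ := hcompB.exists_isMaxOn hneB
    (Metric.continuous_infDist_pt (psiSet G A)).continuousOn
  have hle : Metric.hausdorffDist (psiSet G A) (psiSet G B) ≤
      max (Metric.infDist x₀ (psiSet G B)) (Metric.infDist y₀ (psiSet G A)) := by
    apply Metric.hausdorffDist_le_of_infDist
    · exact le_max_of_le_left Metric.infDist_nonneg
    · exact fun x hx => le_trans (hx₀m hx) (le_max_left _ _)
    · exact fun y hy => le_trans (hy₀m hy) (le_max_right _ _)
  refine lt_of_le_of_lt hle (max_lt ?_ ?_)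
  · obtain ⟨y, hy, hdxy⟩ := hclose x₀ hx₀
    exact lt_of_le_of_lt (Metric.infDist_le_dist_of_mem hy) hdxy
  · obtain ⟨y, hy, hdxy⟩ := hclose' y₀ hy₀
    exact lt_of_le_of_lt (Metric.infDist_le_dist_of_mem hy) hdxy
end
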